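/- Let L : ℝ^p → ℝ be differentiable, H-strongly convex with (1/γ)-Lipschitz gradient, and consider θ_{r+1} = θ_r - η g_r for r = 0,...,k-1 with E[g_r | θ_r] = ∇L(θ_r). Then ∑_{r=0}^{k-1} E[L(θ_r) - L(θ_0)] ≤ -(1/(2η)) E‖θ_k - θ_0‖² - (H/2)∑_{r=0}^{k-1} E‖θ_r - θ_0‖² + (η/2) ∑_{r=0}^{k-1} E‖g_r‖². -/

import Mathlib

/-! Strong convexity between `θ_r` and `θ₀` bounds `L(θ_r) - L(θ₀)` by
`⟪∇L(θ_r), θ_r - θ₀⟫ - (H/2)‖θ_r - θ₀‖²`. Since `θ_r - θ₀` is `σ(θ_r)`-measurable, unbiasedness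
lets `g_r` replace `∇L(θ_r)` in this inner product after taking expectations, and expanding
`‖θ_{r+1} - θ₀‖² = ‖(θ_r - θ₀) - η g_r‖²` rewrites `⟪g_r, θ_r - θ₀⟫` as
`(‖θ_r - θ₀‖² - ‖θ_{r+1} - θ₀‖²)/(2η) + (η/2)‖g_r‖²`. Summing over `r`, the first part telescopes,
and its `r = 0` term vanishes because `θ_0 = θ₀`. -/

open MeasureTheory Finset
open scoped RealInnerProductSpace

theorem real_inner_eq_of_sub_smul {E : Type*} [NormedAddCommGroup E] [InnerProductSpace ℝ E]
    {η : ℝ} (hη : η ≠ 0) (x v : E) :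
    ⟪x, v⟫ = (1 / (2 * η)) * (‖x‖ ^ 2 - ‖x - η • v‖ ^ 2) + (η / 2) * ‖v‖ ^ 2 := by
  rw [norm_sub_sq_real, real_inner_smul_right, norm_smul, Real.norm_eq_abs, mul_pow, sq_abs]
  field_simp
  ring

theorem sum_range_le_of_le_telescoping {η H : ℝ} {k : ℕ} {a b d : ℕ → ℝ} (hd : d 0 = 0)
    (h : ∀ r < k, a r ≤ (1 / (2 * η)) * (d r - d (r + 1)) + (η / 2) * b r - (H / 2) * d r) :
    ∑ r ∈ range k, a r ≤
      -(1 / (2 * η)) * d k - (H / 2) * ∑ r ∈ range k, d r + (η / 2) * ∑ r ∈ range k, b r := by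
  calc ∑ r ∈ range k, a r
      ≤ ∑ r ∈ range k, ((1 / (2 * η)) * (d r - d (r + 1)) + (η / 2) * b r - (H / 2) * d r) :=
        sum_le_sum fun r hr => h r (mem_range.mp hr)
    _ = _ := by
        rw [sum_sub_distrib, sum_add_distrib, ← mul_sum, sum_range_sub', hd, ← mul_sum, ← mul_sum]
        ring

namespace MeasureTheory

variable {Ω E : Type*} [NormedAddCommGroup E] [InnerProductSpace ℝ E]

theorem MemLp.integrable_inner [MeasurableSpace Ω] {μ : Measure Ω} {f g : Ω → E}
    (hf : MemLp f 2 μ) (hg : MemLp g 2 μ) : Integrable (fun ω => ⟪f ω, g ω⟫) μ := by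
  refine (L2.integrable_inner (𝕜 := ℝ) (hf.toLp f) (hg.toLp g)).congr ?_
  filter_upwards [hf.coeFn_toLp, hg.coeFn_toLp] with ω hfω hgω
  rw [hfω, hgω]

theorem integral_inner_condExp_of_stronglyMeasurable [CompleteSpace E] {m m₀ : MeasurableSpace Ω}
    {μ : Measure[m₀] Ω} (hm : m ≤ m₀) [SigmaFinite (μ.trim hm)] {f g : Ω → E}
    (hf : StronglyMeasurable[m] f) (hfg : Integrable (fun ω => ⟪f ω, g ω⟫) μ)
    (hg : Integrable g μ) :
    ∫ ω, ⟪f ω, (μ[g|m]) ω⟫ ∂μ = ∫ ω, ⟪f ω, g ω⟫ ∂μ := by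
  have hpull : μ[fun ω => ⟪f ω, g ω⟫|m] =ᵐ[μ] fun ω => ⟪f ω, (μ[g|m]) ω⟫ :=
    condExp_bilin_of_stronglyMeasurable_left (innerSL ℝ) hf hfg hg
  rw [← integral_congr_ae hpull, integral_condExp hm]

theorem integral_sub_le_of_stochastic_gradient_step [MeasurableSpace Ω] {μ : Measure Ω}
    [IsProbabilityMeasure μ] [CompleteSpace E] [MeasurableSpace E] [BorelSpace E]
    [SecondCountableTopology E] {L : E → ℝ} {G : E → E} {η H : ℝ} (hη : η ≠ 0)
    (hsc : ∀ x y, L y ≥ L x + ⟪G x, y - x⟫ + (H / 2) * ‖y - x‖ ^ 2)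
    {θ g : Ω → E} (c : E) (hθ : Measurable θ) (hθ2 : MemLp θ 2 μ) (hg2 : MemLp g 2 μ)
    (hLθ : Integrable (fun ω => L (θ ω)) μ)
    (hunb : μ[g | MeasurableSpace.comap θ inferInstance] =ᵐ[μ] fun ω => G (θ ω)) :
    (∫ ω, L (θ ω) ∂μ) - L c ≤
      (1 / (2 * η)) * ((∫ ω, ‖θ ω - c‖ ^ 2 ∂μ) - ∫ ω, ‖θ ω - η • g ω - c‖ ^ 2 ∂μ)
        + (η / 2) * (∫ ω, ‖g ω‖ ^ 2 ∂μ) - (H / 2) * ∫ ω, ‖θ ω - c‖ ^ 2 ∂μ := by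
  have hsq {f : Ω → E} (hf : MemLp f 2 μ) : Integrable (fun ω => ‖f ω‖ ^ 2) μ :=
    hf.norm.integrable_sq
  have hX2 : MemLp (fun ω => θ ω - c) 2 μ := hθ2.sub (memLp_const c)
  have hX'2 : MemLp (fun ω => θ ω - η • g ω - c) 2 μ :=
    (hθ2.sub (hg2.const_smul η)).sub (memLp_const c)
  have hX : StronglyMeasurable[MeasurableSpace.comap θ inferInstance] fun ω => θ ω - c :=
    (Measurable.of_comap_le le_rfl).stronglyMeasurable.sub stronglyMeasurable_const
  have hGX : Integrable (fun ω => ⟪θ ω - c, G (θ ω)⟫) μ := by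
    refine (hX2.integrable_inner
      (hg2.condExp one_le_two (m := MeasurableSpace.comap θ inferInstance))).congr ?_
    filter_upwards [hunb] with ω hω
    rw [hω]
  have hconvex : ∀ ω, L (θ ω) - L c ≤ ⟪θ ω - c, G (θ ω)⟫ - (H / 2) * ‖θ ω - c‖ ^ 2 := by
    intro ω
    have h := hsc (θ ω) c
    rw [← neg_sub, inner_neg_right, norm_neg, real_inner_comm] at h
    linarith
  have hunbiased : ∫ ω, ⟪θ ω - c, G (θ ω)⟫ ∂μ = ∫ ω, ⟪θ ω - c, g ω⟫ ∂μ := by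
    rw [← integral_inner_condExp_of_stronglyMeasurable hθ.comap_le hX
      (hX2.integrable_inner hg2) (hg2.integrable one_le_two)]
    refine integral_congr_ae ?_
    filter_upwards [hunb] with ω hω
    rw [hω]
  have hstep : ∀ ω, ⟪θ ω - c, g ω⟫ = (1 / (2 * η)) * (‖θ ω - c‖ ^ 2 - ‖θ ω - η • g ω - c‖ ^ 2)
      + (η / 2) * ‖g ω‖ ^ 2 := fun ω => by
    rw [real_inner_eq_of_sub_smul hη, sub_right_comm]
  calc (∫ ω, L (θ ω) ∂μ) - L c
      = ∫ ω, (L (θ ω) - L c) ∂μ := by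
        rw [integral_sub hLθ (integrable_const _), integral_const, probReal_univ, one_smul]
    _ ≤ ∫ ω, (⟪θ ω - c, G (θ ω)⟫ - (H / 2) * ‖θ ω - c‖ ^ 2) ∂μ :=
        integral_mono (hLθ.sub (integrable_const _)) (hGX.sub ((hsq hX2).const_mul _)) hconvex
    _ = ∫ ω, ⟪θ ω - c, g ω⟫ ∂μ - (H / 2) * ∫ ω, ‖θ ω - c‖ ^ 2 ∂μ := by
        rw [integral_sub hGX ((hsq hX2).const_mul _), integral_const_mul, hunbiased]
    _ = _ := by
        have hdiff : Integrable (fun ω => (1 / (2 * η)) *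
            (‖θ ω - c‖ ^ 2 - ‖θ ω - η • g ω - c‖ ^ 2)) μ := ((hsq hX2).sub (hsq hX'2)).const_mul _
        rw [integral_congr_ae (ae_of_all _ hstep), integral_add hdiff ((hsq hg2).const_mul _),
          integral_const_mul, integral_const_mul, integral_sub (hsq hX2) (hsq hX'2)]

end MeasureTheory

theorem sgd_strongly_convex_intermediate_general {p : ℕ} (η H : ℝ)
    (hη : 0 < η)
    (L : EuclideanSpace ℝ (Fin p) → ℝ)
    (hsc : ∀ x y, L y ≥ L x + ⟪gradient L x, y - x⟫ + (H / 2) * ‖y - x‖ ^ 2)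
    {Ω : Type*} [MeasurableSpace Ω] (μ : Measure Ω) [IsProbabilityMeasure μ]
    (k : ℕ)
    (θ : ℕ → Ω → EuclideanSpace ℝ (Fin p))
    (g : ℕ → Ω → EuclideanSpace ℝ (Fin p))
    (θ₀ : EuclideanSpace ℝ (Fin p)) (hθ0 : θ 0 = fun _ => θ₀)
    (hupd : ∀ r < k, ∀ ω, θ (r + 1) ω = θ r ω - η • g r ω)
    (hθmeas : ∀ r, Measurable (θ r))
    (hg2 : ∀ r, MemLp (g r) 2 μ)
    (hLint : ∀ r, Integrable (fun ω => L (θ r ω)) μ)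
    (hunbiased : ∀ r < k,
      μ[g r | MeasurableSpace.comap (θ r) inferInstance] =ᵐ[μ]
        fun ω => gradient L (θ r ω)) :
    ∑ r ∈ range k, ((∫ ω, L (θ r ω) ∂μ) - L θ₀) ≤
      -(1 / (2 * η)) * ∫ ω, ‖θ k ω - θ₀‖ ^ 2 ∂μ
        - (H / 2) * ∑ r ∈ range k, ∫ ω, ‖θ r ω - θ₀‖ ^ 2 ∂μ
        + (η / 2) * ∑ r ∈ range k, ∫ ω, ‖g r ω‖ ^ 2 ∂μ := by
  have hθ2 : ∀ r ≤ k, MemLp (θ r) 2 μ := by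
    intro r
    induction r with
    | zero => exact fun _ => hθ0 ▸ memLp_const θ₀
    | succ r ih =>
      intro hr
      rw [funext (hupd r hr)]
      exact (ih (Nat.le_of_succ_le hr)).sub ((hg2 r).const_smul η)
  refine sum_range_le_of_le_telescoping (d := fun r => ∫ ω, ‖θ r ω - θ₀‖ ^ 2 ∂μ) ?_
    fun r hr => ?_
  · simp [hθ0]
  · rw [funext (hupd r hr)]
    exact integral_sub_le_of_stochastic_gradient_step hη.ne' hsc θ₀ (hθmeas r) (hθ2 r hr.le)
      (hg2 r) (hLint r) (hunbiased r hr)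

theorem sgd_strongly_convex_intermediate {p : ℕ} (γ η H : ℝ) (hγ : 0 < γ)
    (hη : 0 < η) (hH : 0 < H)
    (L : EuclideanSpace ℝ (Fin p) → ℝ) (hL : Differentiable ℝ L)
    (hLip : ∀ x y, ‖gradient L x - gradient L y‖ ≤ (1 / γ) * ‖x - y‖)
    (hsc : ∀ x y, L y ≥ L x + ⟪gradient L x, y - x⟫ + (H / 2) * ‖y - x‖ ^ 2)
    {Ω : Type*} [MeasurableSpace Ω] (μ : Measure Ω) [IsProbabilityMeasure μ]
    (k : ℕ) (hk : 0 < k)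
    (θ : ℕ → Ω → EuclideanSpace ℝ (Fin p))
    (g : ℕ → Ω → EuclideanSpace ℝ (Fin p))
    (θ₀ : EuclideanSpace ℝ (Fin p)) (hθ0 : θ 0 = fun _ => θ₀)
    (hupd : ∀ r < k, ∀ ω, θ (r + 1) ω = θ r ω - η • g r ω)
    (hθmeas : ∀ r, Measurable (θ r))
    (hg2 : ∀ r, MemLp (g r) 2 μ)
    (hLint : ∀ r, Integrable (fun ω => L (θ r ω)) μ)
    (hunbiased : ∀ r < k,
      μ[g r | MeasurableSpace.comap (θ r) inferInstance] =ᵐ[μ]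
        fun ω => gradient L (θ r ω)) :
    ∑ r ∈ range k, ((∫ ω, L (θ r ω) ∂μ) - L θ₀) ≤
      -(1 / (2 * η)) * ∫ ω, ‖θ k ω - θ₀‖ ^ 2 ∂μ
        - (H / 2) * ∑ r ∈ range k, ∫ ω, ‖θ r ω - θ₀‖ ^ 2 ∂μ
        + (η / 2) * ∑ r ∈ range k, ∫ ω, ‖g r ω‖ ^ 2 ∂μ :=
  sgd_strongly_convex_intermediate_general η H hη L hsc μ k θ g θ₀ hθ0 hupd hθmeas hg2 hLint
    hunbiased
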